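/- Swapping two adjacent receive events of distinct receiving processes in a word preserves channel-compliance. -/
import Mathlib


/-- Events: `snd P Q m` is process `P` sending message `m` to `Q`;
    `rcv P Q m` is process `Q` receiving message `m` from `P`. -/
inductive Ev where
  | snd : ℕ → ℕ → ℕ → Ev
  | rcv : ℕ → ℕ → ℕ → Ev
deriving DecidableEq

/-- Message values of send events on channel (P,Q) in w. -/
def sends (w : List Ev) (P Q : ℕ) : List ℕ :=
  w.filterMap fun e => match e with
    | .snd p q m => if p = P ∧ q = Q then some m else none
    | _ => none

/-- Message values of receive events on channel (P,Q) in w. -/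
def recvs (w : List Ev) (P Q : ℕ) : List ℕ :=
  w.filterMap fun e => match e with
    | .rcv p q m => if p = P ∧ q = Q then some m else none
    | _ => none

def channelCompliant (w : List Ev) : Prop :=
  ∀ u, u <+: w → ∀ P Q, recvs u P Q <+: sends u P Q

def complete (w : List Ev) : Prop :=
  ∀ P Q, sends w P Q = recvs w P Q

def bounded (B : ℕ) (w : List Ev) : Prop :=
  ∀ u, u <+: w → ∀ P Q, (sends u P Q).length ≤ (recvs u P Q).length + B

def halfDuplex (w : List Ev) : Prop :=
  ∀ u, u <+: w → ∀ P Q,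
    sends u P Q = recvs u P Q ∨ sends u Q P = recvs u Q P

/-- Send at position i on channel (P,Q) is matched by receive at position j. -/
def Matches (w : List Ev) (P Q i j : ℕ) : Prop :=
  i < j ∧ j < w.length ∧
  (∃ m, w[i]? = some (.snd P Q m) ∧ w[j]? = some (.rcv P Q m)) ∧
  sends (w.take (i+1)) P Q = recvs (w.take (j+1)) P Q

def IsSendAt (w : List Ev) (P Q i : ℕ) : Prop := ∃ m, w[i]? = some (Ev.snd P Q m)
def IsRcvAt (w : List Ev) (P Q i : ℕ) : Prop := ∃ m, w[i]? = some (Ev.rcv P Q m)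
def MatchedAt (w : List Ev) (P Q i : ℕ) : Prop := ∃ j, Matches w P Q i j

/-- The process performing the event. -/
def actor : Ev → ℕ
  | .snd p _ _ => p
  | .rcv _ q _ => q

/-- Projection of a word onto the events of process X. -/
def proj (w : List Ev) (X : ℕ) : List Ev := w.filter (fun e => actor e == X)

/-- Two words induce the same MSC (same per-process orders; with FIFO matching,
    this determines the matching). -/
def sameMSC (w v : List Ev) : Prop := ∀ X, proj w X = proj v X

/-- Existentially B-bounded: some linearisation of msc(w) is B-bounded. -/
def existBounded (B : ℕ) (w : List Ev) : Prop :=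
  ∃ v, channelCompliant v ∧ sameMSC w v ∧ bounded B v

def isSnd : Ev → Prop
  | .snd _ _ _ => True
  | _ => False

def isRcv : Ev → Prop
  | .rcv _ _ _ => True
  | _ => False

/-- Positions i and j lie in the same block of the block decomposition. -/
def SameBlock (blocks : List (List Ev)) (i j : ℕ) : Prop :=
  ∃ t, ((blocks.take t).flatten).length ≤ i ∧ j < ((blocks.take (t+1)).flatten).length

/-- w is k-synchronisable: some linearisation of msc(w) splits into blocks of
    at most k sends followed by at most k receives, with matched pairs co-located. -/
def kSynchronisable (k : ℕ) (w : List Ev) : Prop :=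
  ∃ blocks : List (List Ev),
    channelCompliant blocks.flatten ∧ sameMSC w blocks.flatten ∧
    (∀ b ∈ blocks, ∃ s r, b = s ++ r ∧ s.length ≤ k ∧ r.length ≤ k ∧
      (∀ e ∈ s, isSnd e) ∧ (∀ e ∈ r, isRcv e)) ∧
    (∀ P Q i j, Matches blocks.flatten P Q i j → SameBlock blocks i j)

/-- One step of the indistinguishability relation ∼. -/
inductive Sim1 : List Ev → List Ev → Prop
  | ss (u v : List Ev) (P Q R S m m' : ℕ) (h : P ≠ R) :
      Sim1 (u ++ Ev.snd P Q m :: Ev.snd R S m' :: v)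
           (u ++ Ev.snd R S m' :: Ev.snd P Q m :: v)
  | rr (u v : List Ev) (P Q R S m m' : ℕ) (h : Q ≠ S) :
      Sim1 (u ++ Ev.rcv P Q m :: Ev.rcv R S m' :: v)
           (u ++ Ev.rcv R S m' :: Ev.rcv P Q m :: v)
  | sr (u v : List Ev) (P Q R S m m' : ℕ) (h1 : P ≠ S) (h2 : P ≠ R ∨ Q ≠ S) :
      Sim1 (u ++ Ev.snd P Q m :: Ev.rcv R S m' :: v)
           (u ++ Ev.rcv R S m' :: Ev.snd P Q m :: v)
  | srSame (u v : List Ev) (P Q m m' : ℕ)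
      (h : (recvs u P Q).length < (sends u P Q).length) :
      Sim1 (u ++ Ev.snd P Q m :: Ev.rcv P Q m' :: v)
           (u ++ Ev.rcv P Q m' :: Ev.snd P Q m :: v)

/-- The indistinguishability relation ∼ (finitely many swaps). -/
def Sim : List Ev → List Ev → Prop := Relation.ReflTransGen Sim1

lemma prefix_append_cases {α} (t a b : List α) (h : t <+: a ++ b) :
    t <+: a ∨ ∃ s, s <+: b ∧ t = a ++ s := by
  rcases le_or_gt t.length a.length with hl | hl
  · left; exact List.prefix_of_prefix_length_le h (a.prefix_append b) hl
  · right
    have ha : a <+: t := List.prefix_of_prefix_length_le (a.prefix_append b) h hl.le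
    obtain ⟨s, rfl⟩ := ha
    refine ⟨s, ?_, rfl⟩
    exact (List.prefix_append_right_inj a).mp h

lemma sends_swap (P Q R S m m' : ℕ) (u v : List Ev) (A B : ℕ) :
    sends (u ++ Ev.rcv R S m' :: Ev.rcv P Q m :: v) A B
      = sends (u ++ Ev.rcv P Q m :: Ev.rcv R S m' :: v) A B := by
  unfold sends
  simp [List.filterMap_append, List.filterMap_cons]

lemma recvs_swap (P Q R S m m' : ℕ) (hQS : Q ≠ S) (u v : List Ev) (A B : ℕ) :
    recvs (u ++ Ev.rcv R S m' :: Ev.rcv P Q m :: v) A B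
      = recvs (u ++ Ev.rcv P Q m :: Ev.rcv R S m' :: v) A B := by
  unfold recvs
  simp only [List.filterMap_append, List.filterMap_cons]
  by_cases hp : P = A ∧ Q = B
  · have hr : ¬(R = A ∧ S = B) := fun hr => hQS (hp.2.trans hr.2.symm)
    simp [hp, hr]
  · by_cases hr : R = A ∧ S = B <;> simp [hp, hr]

/-- swapping two adjacent receives of distinct receiving processes
    preserves channel-compliance. -/
theorem swap_receives_preserves_channelCompliant
    (u v : List Ev) (P Q R S m m' : ℕ) (hQS : Q ≠ S)
    (h : channelCompliant (u ++ Ev.rcv P Q m :: Ev.rcv R S m' :: v)) :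
    channelCompliant (u ++ Ev.rcv R S m' :: Ev.rcv P Q m :: v) := by
  intro t ht A B
  rcases prefix_append_cases t u _ ht with h1 | ⟨s, hs, rfl⟩
  · exact h t (h1.trans (u.prefix_append _)) A B
  · rcases prefix_append_cases s [Ev.rcv R S m', Ev.rcv P Q m] v hs with h2 | ⟨s', hs', rfl⟩
    · obtain ⟨s2, hs2⟩ := h2
      have hcases : s = [] ∨ s = [Ev.rcv R S m'] ∨ s = [Ev.rcv R S m', Ev.rcv P Q m] := by
        rcases s with _ | ⟨a, _ | ⟨b, _ | ⟨c, tl⟩⟩⟩ <;> simp_all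
      rcases hcases with rfl | rfl | rfl
      · simpa using h u (u.prefix_append _) A B
      · have hpre : u ++ [Ev.rcv P Q m, Ev.rcv R S m'] <+:
            u ++ Ev.rcv P Q m :: Ev.rcv R S m' :: v :=
          (List.prefix_append_right_inj u).mpr ⟨v, by simp⟩
        have hh := h _ hpre A B
        have hsends : sends (u ++ [Ev.rcv R S m']) A B
            = sends (u ++ [Ev.rcv P Q m, Ev.rcv R S m']) A B := by
          unfold sends; simp [List.filterMap_append, List.filterMap_cons]
        have hrecvs : recvs (u ++ [Ev.rcv R S m']) A B
            <+: recvs (u ++ [Ev.rcv P Q m, Ev.rcv R S m']) A B := by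
          unfold recvs
          simp only [List.filterMap_append, List.filterMap_cons]
          by_cases hp : P = A ∧ Q = B
          · have hr : ¬(R = A ∧ S = B) := fun hr => hQS (hp.2.trans hr.2.symm)
            simp [hp, hr, List.prefix_append]
          · by_cases hr : R = A ∧ S = B <;> simp [hp, hr]
        rw [hsends]
        exact hrecvs.trans hh
      · have hpre : u ++ Ev.rcv P Q m :: Ev.rcv R S m' :: ([] : List Ev) <+:
            u ++ Ev.rcv P Q m :: Ev.rcv R S m' :: v :=
          (List.prefix_append_right_inj u).mpr ⟨v, by simp⟩
        have hh := h _ hpre A B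
        have heq : u ++ [Ev.rcv R S m', Ev.rcv P Q m]
            = u ++ Ev.rcv R S m' :: Ev.rcv P Q m :: ([] : List Ev) := by simp
        rw [heq, sends_swap P Q R S m m' u [], recvs_swap P Q R S m m' hQS u []]
        exact hh
    · have hpre : u ++ Ev.rcv P Q m :: Ev.rcv R S m' :: s' <+:
          u ++ Ev.rcv P Q m :: Ev.rcv R S m' :: v :=
        (List.prefix_append_right_inj u).mpr
          (List.cons_prefix_cons.mpr ⟨rfl, List.cons_prefix_cons.mpr ⟨rfl, hs'⟩⟩)
      have hh := h _ hpre A B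
      have heq : u ++ ([Ev.rcv R S m', Ev.rcv P Q m] ++ s')
          = u ++ Ev.rcv R S m' :: Ev.rcv P Q m :: s' := by simp
      rw [heq, sends_swap P Q R S m m' u s', recvs_swap P Q R S m m' hQS u s']
      exact hh
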